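/- There exist a smooth homogeneous cubic F ∈ ℂ[z₁,…,z₅] and a homogeneous polynomial Q of degree 2 such that no nonzero linear form L (homogeneous of degree 1) satisfies L·Q ∈ J_F; that is, the degree-1 part of the colon ideal (J_{F,3} : Q) is zero. (This is the existence form of the statement that for generic F and Q the map α : H⁰(N_{Y/X}) → H^{1,1}(Y)_new is injective.) -/
import Mathlib


open MvPolynomial

/-- The Jacobian ideal of `F`, generated by its partial derivatives. -/
noncomputable def jacobianIdeal {n : ℕ} (F : MvPolynomial (Fin n) ℂ) :
    Ideal (MvPolynomial (Fin n) ℂ) :=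
  Ideal.span (Set.range fun i => pderiv i F)

/-- A form is smooth if its partial derivatives have no common zero away from the origin. -/
def IsSmoothForm {n : ℕ} (F : MvPolynomial (Fin n) ℂ) : Prop :=
  ∀ x : Fin n → ℂ, (∀ i : Fin n, eval x (pderiv i F) = 0) → x = 0

private lemma deg_one_monomial (d : Fin 5 →₀ ℕ) (h : (Finsupp.weight (1 : Fin 5 → ℕ)) d = 1) :
    ∃ i, d = Finsupp.single i 1 := by
  rw [Finsupp.weight_apply, Finsupp.sum_fintype] at h
  · simp only [Pi.one_apply, smul_eq_mul, mul_one, Fin.sum_univ_five] at h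
    have h5 : (d 0 = 1 ∧ d 1 = 0 ∧ d 2 = 0 ∧ d 3 = 0 ∧ d 4 = 0) ∨
        (d 1 = 1 ∧ d 0 = 0 ∧ d 2 = 0 ∧ d 3 = 0 ∧ d 4 = 0) ∨
        (d 2 = 1 ∧ d 0 = 0 ∧ d 1 = 0 ∧ d 3 = 0 ∧ d 4 = 0) ∨
        (d 3 = 1 ∧ d 0 = 0 ∧ d 1 = 0 ∧ d 2 = 0 ∧ d 4 = 0) ∨
        (d 4 = 1 ∧ d 0 = 0 ∧ d 1 = 0 ∧ d 2 = 0 ∧ d 3 = 0) := by omega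
    rcases h5 with h5 | h5 | h5 | h5 | h5
    · exact ⟨0, by ext j; fin_cases j <;> simp [Finsupp.single_apply] <;> omega⟩
    · exact ⟨1, by ext j; fin_cases j <;> simp [Finsupp.single_apply] <;> omega⟩
    · exact ⟨2, by ext j; fin_cases j <;> simp [Finsupp.single_apply] <;> omega⟩
    · exact ⟨3, by ext j; fin_cases j <;> simp [Finsupp.single_apply] <;> omega⟩
    · exact ⟨4, by ext j; fin_cases j <;> simp [Finsupp.single_apply] <;> omega⟩
  · intro; simp

private lemma pderiv_fermat (i : Fin 5) :
    pderiv i (∑ j : Fin 5, X j ^ 3 : MvPolynomial (Fin 5) ℂ) = 3 * X i ^ 2 := by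
  rw [map_sum, Finset.sum_eq_single i]
  · simp [pderiv_pow]
  · intro j _ hj
    simp [pderiv_pow, pderiv_X, Pi.single_apply, hj.symm]
  · simp

theorem exists_pair_alpha_injective :
    ∃ F Q : MvPolynomial (Fin 5) ℂ, F.IsHomogeneous 3 ∧ IsSmoothForm F ∧
      Q.IsHomogeneous 2 ∧
      ∀ L : MvPolynomial (Fin 5) ℂ, L.IsHomogeneous 1 → L ≠ 0 →
        L * Q ∉ jacobianIdeal F := by
  refine ⟨∑ j : Fin 5, X j ^ 3, X 0 * X 1 + X 2 * X 3, ?_, ?_, ?_, ?_⟩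
  · exact IsHomogeneous.sum _ _ _ fun j _ => by simpa using (isHomogeneous_X ℂ j).pow 3
  · intro x hx
    funext i
    have h := hx i
    rw [pderiv_fermat] at h
    simp only [map_mul, map_pow, eval_X, map_ofNat, Pi.zero_apply] at h ⊢
    have h3 : (3 : ℂ) ≠ 0 := by norm_num
    have := mul_eq_zero.mp h
    rcases this with h' | h'
    · exact absurd h' h3
    · exact pow_eq_zero_iff (by norm_num) |>.mp h'
  · have h01 : ((X 0 * X 1 : MvPolynomial (Fin 5) ℂ)).IsHomogeneous 2 := by
      simpa using (isHomogeneous_X ℂ (0 : Fin 5)).mul (isHomogeneous_X ℂ 1)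
    have h23 : ((X 2 * X 3 : MvPolynomial (Fin 5) ℂ)).IsHomogeneous 2 := by
      simpa using (isHomogeneous_X ℂ (2 : Fin 5)).mul (isHomogeneous_X ℂ 3)
    exact h01.add h23
  · intro L hL hL0 hmem
    -- the Jacobian ideal is contained in the monomial ideal generated by the `X i ^ 2`
    have hsub : jacobianIdeal (∑ j : Fin 5, X j ^ 3 : MvPolynomial (Fin 5) ℂ) ≤
        Ideal.span ((fun s => (monomial s) (1 : ℂ)) ''
          (Set.range fun i : Fin 5 => Finsupp.single i 2)) := by
      rw [jacobianIdeal, Ideal.span_le]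
      rintro _ ⟨i, rfl⟩
      show pderiv i (∑ j : Fin 5, X j ^ 3) ∈ _
      rw [pderiv_fermat, X_pow_eq_monomial]
      exact Ideal.mul_mem_left _ 3 (Ideal.subset_span ⟨_, ⟨i, rfl⟩, rfl⟩)
    have hsup := MvPolynomial.mem_ideal_span_monomial_image.mp (hsub hmem)
    -- every single-variable coefficient of L vanishes
    have key : ∀ i : Fin 5, coeff (Finsupp.single i 1) L = 0 := by
      intro i
      by_contra hc
      fin_cases i
      · have hco : coeff ((Finsupp.single (0 : Fin 5) 1 + Finsupp.single 2 1) +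
            Finsupp.single 3 1) (L * (X 0 * X 1 + X 2 * X 3)) = coeff (Finsupp.single 0 1) L := by
          rw [mul_add, coeff_add, ← mul_assoc, ← mul_assoc, coeff_mul_X, coeff_mul_X]
          simp [coeff_mul_X', Finsupp.single_apply]
        have hne : coeff ((Finsupp.single (0 : Fin 5) 1 + Finsupp.single 2 1) +
            Finsupp.single 3 1) (L * (X 0 * X 1 + X 2 * X 3)) ≠ 0 := by rw [hco]; exact hc
        obtain ⟨s, ⟨j, rfl⟩, hle⟩ := hsup _ (MvPolynomial.mem_support_iff.mpr hne)
        have h2 := Finsupp.le_def.mp hle j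
        fin_cases j <;> simp [Finsupp.single_apply] at h2
      · have hco : coeff ((Finsupp.single (1 : Fin 5) 1 + Finsupp.single 2 1) +
            Finsupp.single 3 1) (L * (X 0 * X 1 + X 2 * X 3)) = coeff (Finsupp.single 1 1) L := by
          rw [mul_add, coeff_add, ← mul_assoc, ← mul_assoc, coeff_mul_X, coeff_mul_X]
          simp [coeff_mul_X', Finsupp.single_apply]
        have hne : coeff ((Finsupp.single (1 : Fin 5) 1 + Finsupp.single 2 1) +
            Finsupp.single 3 1) (L * (X 0 * X 1 + X 2 * X 3)) ≠ 0 := by rw [hco]; exact hc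
        obtain ⟨s, ⟨j, rfl⟩, hle⟩ := hsup _ (MvPolynomial.mem_support_iff.mpr hne)
        have h2 := Finsupp.le_def.mp hle j
        fin_cases j <;> simp [Finsupp.single_apply] at h2
      · have hco : coeff ((Finsupp.single (2 : Fin 5) 1 + Finsupp.single 0 1) +
            Finsupp.single 1 1) (L * (X 0 * X 1 + X 2 * X 3)) = coeff (Finsupp.single 2 1) L := by
          rw [mul_add, coeff_add, ← mul_assoc, ← mul_assoc, coeff_mul_X, coeff_mul_X]
          simp [coeff_mul_X', Finsupp.single_apply]
        have hne : coeff ((Finsupp.single (2 : Fin 5) 1 + Finsupp.single 0 1) +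
            Finsupp.single 1 1) (L * (X 0 * X 1 + X 2 * X 3)) ≠ 0 := by rw [hco]; exact hc
        obtain ⟨s, ⟨j, rfl⟩, hle⟩ := hsup _ (MvPolynomial.mem_support_iff.mpr hne)
        have h2 := Finsupp.le_def.mp hle j
        fin_cases j <;> simp [Finsupp.single_apply] at h2
      · have hco : coeff ((Finsupp.single (3 : Fin 5) 1 + Finsupp.single 0 1) +
            Finsupp.single 1 1) (L * (X 0 * X 1 + X 2 * X 3)) = coeff (Finsupp.single 3 1) L := by
          rw [mul_add, coeff_add, ← mul_assoc, ← mul_assoc, coeff_mul_X, coeff_mul_X]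
          simp [coeff_mul_X', Finsupp.single_apply]
        have hne : coeff ((Finsupp.single (3 : Fin 5) 1 + Finsupp.single 0 1) +
            Finsupp.single 1 1) (L * (X 0 * X 1 + X 2 * X 3)) ≠ 0 := by rw [hco]; exact hc
        obtain ⟨s, ⟨j, rfl⟩, hle⟩ := hsup _ (MvPolynomial.mem_support_iff.mpr hne)
        have h2 := Finsupp.le_def.mp hle j
        fin_cases j <;> simp [Finsupp.single_apply] at h2
      · have hco : coeff ((Finsupp.single (4 : Fin 5) 1 + Finsupp.single 0 1) +
            Finsupp.single 1 1) (L * (X 0 * X 1 + X 2 * X 3)) = coeff (Finsupp.single 4 1) L := by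
          rw [mul_add, coeff_add, ← mul_assoc, ← mul_assoc, coeff_mul_X, coeff_mul_X]
          simp [coeff_mul_X', Finsupp.single_apply]
        have hne : coeff ((Finsupp.single (4 : Fin 5) 1 + Finsupp.single 0 1) +
            Finsupp.single 1 1) (L * (X 0 * X 1 + X 2 * X 3)) ≠ 0 := by rw [hco]; exact hc
        obtain ⟨s, ⟨j, rfl⟩, hle⟩ := hsup _ (MvPolynomial.mem_support_iff.mpr hne)
        have h2 := Finsupp.le_def.mp hle j
        fin_cases j <;> simp [Finsupp.single_apply] at h2
    -- hence L = 0, contradiction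
    apply hL0
    ext d
    rw [coeff_zero]
    by_contra hd
    obtain ⟨i, rfl⟩ := deg_one_monomial d (hL hd)
    exact hd (key i)
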